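/- Let G be a graph and M = M[IAS(G)]. Then: (1) if n ≤ 3 and G is connected, then κ(M) = n; (2) if G is disconnected, then κ(M) = 1; (3) if n ≥ 4, G is connected, and G is not prime, then κ(M) = 3. -/

import Mathlib

open scoped ENat

variable {V : Type*} [Fintype V] [DecidableEq V]

/-- The column of the matrix `IAS(G) = (I | A | A+I)` indexed by `(v, i)`:
`i = 0` gives `φ(v)` (identity column), `i = 1` gives `χ(v)` (column of `A`),
`i = 2` gives `ψ(v)` (column of `A + I`). -/
def iasCol (A : Matrix V V (ZMod 2)) : V × Fin 3 → V → ZMod 2 :=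
  fun p w =>
    if p.2 = 0 then (if w = p.1 then 1 else 0)
    else if p.2 = 1 then A w p.1
    else A w p.1 + (if w = p.1 then 1 else 0)

/-- The rank of a subset of the ground set `W(G) = V × Fin 3` of the isotropic
matroid: the GF(2)-rank of the corresponding set of columns. -/
noncomputable def iasRank (A : Matrix V V (ZMod 2)) (S : Set (V × Fin 3)) : ℕ :=
  Module.finrank (ZMod 2) (Submodule.span (ZMod 2) (iasCol A '' S))

/-- The connectivity function `λ(S) = r(S) + r(W - S) - r(M)`. -/
noncomputable def iasLambda (A : Matrix V V (ZMod 2)) (S : Set (V × Fin 3)) : ℕ :=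
  iasRank A S + iasRank A Sᶜ - iasRank A Set.univ

/-- Independence in the isotropic matroid. -/
def iasIndep (A : Matrix V V (ZMod 2)) (S : Set (V × Fin 3)) : Prop :=
  LinearIndependent (ZMod 2) (fun s : S => iasCol A s.1)

/-- Circuits of the isotropic matroid: minimal dependent sets. -/
def iasCircuit (A : Matrix V V (ZMod 2)) (C : Set (V × Fin 3)) : Prop :=
  ¬ iasIndep A C ∧ ∀ S ⊂ C, iasIndep A S

/-- An ordinary `k`-separation: `λ(S) < k` and `|S|, |W - S| ≥ k`. -/
def OrdinarySep (A : Matrix V V (ZMod 2)) (k : ℕ) (S : Set (V × Fin 3)) : Prop :=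
  0 < k ∧ iasLambda A S < k ∧ k ≤ S.ncard ∧ k ≤ Sᶜ.ncard

/-- A cyclic `k`-separation: `λ(S) < k` and both `S` and `W - S` are dependent. -/
def CyclicSep (A : Matrix V V (ZMod 2)) (k : ℕ) (S : Set (V × Fin 3)) : Prop :=
  0 < k ∧ iasLambda A S < k ∧ ¬ iasIndep A S ∧ ¬ iasIndep A Sᶜ

/-- A vertical `k`-separation: `λ(S) < k` and `r(S), r(W - S) ≥ k`. -/
def VerticalSep (A : Matrix V V (ZMod 2)) (k : ℕ) (S : Set (V × Fin 3)) : Prop :=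
  0 < k ∧ iasLambda A S < k ∧ k ≤ iasRank A S ∧ k ≤ iasRank A Sᶜ

/-- `τ(M) = min {k : M has an ordinary k-separation}`, with `min ∅ = ∞`. -/
noncomputable def iasTau (A : Matrix V V (ZMod 2)) : ℕ∞ :=
  sInf {k : ℕ∞ | ∃ m : ℕ, (m : ℕ∞) = k ∧ ∃ S, OrdinarySep A m S}

/-- `κ*(M) = min ({k : M has a cyclic k-separation} ∪ {|W| - r(M)})`. -/
noncomputable def iasKappaStar (A : Matrix V V (ZMod 2)) : ℕ :=
  sInf ({k : ℕ | ∃ S, CyclicSep A k S} ∪ {3 * Fintype.card V - iasRank A Set.univ})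

/-- `κ(M) = min ({k : M has a vertical k-separation} ∪ {r(M)})`. -/
noncomputable def iasKappa (A : Matrix V V (ZMod 2)) : ℕ :=
  sInf ({k : ℕ | ∃ S, VerticalSep A k S} ∪ {iasRank A Set.univ})

/-- The simple graph underlying a looped simple graph given by its adjacency matrix. -/
def toSimpleGraph (A : Matrix V V (ZMod 2)) : SimpleGraph V where
  Adj v w := v ≠ w ∧ A v w = 1 ∧ A w v = 1
  symm := ⟨fun v w ⟨h1, h2, h3⟩ => ⟨Ne.symm h1, h3, h2⟩⟩
  loopless := ⟨fun v h => h.1 rfl⟩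

/-- The open neighborhood `N_G(v)`. -/
def nbhd (A : Matrix V V (ZMod 2)) (v : V) : Set V := {u | u ≠ v ∧ A v u = 1}

/-- `v` is a pendant vertex: `N_G(v) = {w}` for some `w`. -/
def IsPendant (A : Matrix V V (ZMod 2)) (v : V) : Prop := ∃ w, nbhd A v = {w}

/-- `G` has a pair of twin vertices: `v ≠ w` with `N_G(v) - {w} = N_G(w) - {v}`. -/
def HasTwins (A : Matrix V V (ZMod 2)) : Prop :=
  ∃ v w, v ≠ w ∧ nbhd A v \ {w} = nbhd A w \ {v}

/-- The cut-rank `c_G(X)`: the GF(2)-rank of the submatrix `A[V - X, X]`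
(columns indexed by `X`, rows indexed by `V - X`). -/
noncomputable def cutRank (A : Matrix V V (ZMod 2)) (X : Set V) : ℕ :=
  Module.finrank (ZMod 2)
    (Submodule.span (ZMod 2) ((fun x : V => fun w : ↥(Xᶜ) => A w.1 x) '' X))

/-- `τ_G(X) = ⋃_{x ∈ X} τ_G(x)`, the union of the vertex triples of members of `X`. -/
def tauSet (X : Set V) : Set (V × Fin 3) := {p | p.1 ∈ X}

/-- Loop complementation at `v`. -/
def loopComp (A : Matrix V V (ZMod 2)) (v : V) : Matrix V V (ZMod 2) :=
  fun x y => A x y + if x = v ∧ y = v then 1 else 0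

/-- Simple local complementation at `v`. -/
def simpleLocalComp (A : Matrix V V (ZMod 2)) (v : V) : Matrix V V (ZMod 2) :=
  fun x y => A x y +
    if x ≠ y ∧ (x ≠ v ∧ A v x = 1) ∧ (y ≠ v ∧ A v y = 1) then 1 else 0

/-- Non-simple local complementation at `v`. -/
def nonSimpleLocalComp (A : Matrix V V (ZMod 2)) (v : V) : Matrix V V (ZMod 2) :=
  fun x y => simpleLocalComp A v x y + if x = y ∧ x ≠ v ∧ A v x = 1 then 1 else 0

/-- One local move. -/
def LocalStep (A B : Matrix V V (ZMod 2)) : Prop :=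
  ∃ v, B = loopComp A v ∨ B = simpleLocalComp A v ∨ B = nonSimpleLocalComp A v

/-- Local equivalence: a finite sequence of loop complementations and
(simple or non-simple) local complementations. -/
def LocallyEquiv (A B : Matrix V V (ZMod 2)) : Prop :=
  Relation.ReflTransGen LocalStep A B

/-- `G` has a split: a bipartition `(V₁, V₂)` of `V` with `|V₁|, |V₂| ≥ 2` such that the
GF(2)-rank of `A[V₁, V₂]` is at most 1. -/
def HasSplit (A : Matrix V V (ZMod 2)) : Prop :=
  ∃ X : Set V, 2 ≤ X.ncard ∧ 2 ≤ Xᶜ.ncard ∧ cutRank A X ≤ 1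

/-- A transverse circuit: a circuit of the isotropic matroid meeting each
vertex triple at most once. -/
def IsTransverseCircuit (A : Matrix V V (ZMod 2)) (C : Set (V × Fin 3)) : Prop :=
  iasCircuit A C ∧ ∀ p ∈ C, ∀ q ∈ C, p.1 = q.1 → p = q

/-- An isotropic `k`-separation of `G`: `|X|, |V - X| ≥ k` and `c_G(X) < k`. -/
def IsotropicSep (A : Matrix V V (ZMod 2)) (k : ℕ) (X : Set V) : Prop :=
  k ≤ X.ncard ∧ k ≤ Xᶜ.ncard ∧ cutRank A X < k

/-- The isotropic connectivity `κ_B(G)`, with `min ∅ = ∞`. -/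
noncomputable def kappaB (A : Matrix V V (ZMod 2)) : ℕ∞ :=
  sInf {j : ℕ∞ | ∃ k : ℕ, (k : ℕ∞) = j ∧ ∃ X, IsotropicSep A k X}

/-- The 5-cycle `C₅`. -/
def C5mat : Matrix (Fin 5) (Fin 5) (ZMod 2) :=
  fun i j => if (i.val + 1) % 5 = j.val ∨ (j.val + 1) % 5 = i.val then 1 else 0

/-- The wheel `W₅` : a 5-cycle on `{0,…,4}` plus a hub `5` adjacent to all. -/
def W5mat : Matrix (Fin 6) (Fin 6) (ZMod 2) :=
  fun i j =>
    if (i.val = 5 ∧ j.val ≠ 5) ∨ (j.val = 5 ∧ i.val ≠ 5) then 1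
    else if i.val ≠ 5 ∧ j.val ≠ 5 ∧ ((i.val + 1) % 5 = j.val ∨ (j.val + 1) % 5 = i.val) then 1
    else 0

/-! The three columns of `IAS(G)` at a vertex `v` are `e_v`, the column `A e_v`, and their sum, so
any two of them span all three. Restricting to the rows outside `X` kills the `e_v` with `v ∈ X`,
whence `r(τ(X)) = |X| + c(X)` for the cut-rank `c`, and `λ(τ(X)) = c(X) + c(V - X)`. A component
(`c = 0`) or a split (`c = 1` on both sides, by symmetry) `X` thus gives the vertical `1`- resp.
`3`-separation `τ(X)`. Conversely, for any `S ⊆ W(G)` each vertex has two elements of its triple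
on the same side, so that side spans the whole triple. Sorting the vertices by this side into
`X` and `V - X` gives `λ(S) ≥ c(X) + c(V - X)`, which is at least `2` in a connected graph unless
one side spans everything, in which case `λ(S)` is the rank of the other side. -/

section LinearAlgebra

open Module Submodule

theorem finrank_map_add_finrank_inf_ker {K M N : Type*} [DivisionRing K] [AddCommGroup M]
    [Module K M] [AddCommGroup N] [Module K N] [FiniteDimensional K M]
    (U : Submodule K M) (f : M →ₗ[K] N) :
    finrank K (U.map f) + finrank K ↥(U ⊓ LinearMap.ker f) = finrank K U := by
  rw [← LinearMap.range_domRestrict, ← (f.domRestrict U).finrank_range_add_finrank_ker,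
    LinearMap.ker_domRestrict, ← map_comap_subtype, finrank_map_subtype_eq]

variable {K ι : Type*} [Field K]

def restrictCompl (K : Type*) [Field K] (X : Set ι) : (ι → K) →ₗ[K] (↥Xᶜ → K) :=
  LinearMap.funLeft K K Subtype.val

theorem single_mem_ker_restrictCompl [DecidableEq ι] {X : Set ι} {v : ι} (hv : v ∈ X) :
    Pi.single v (1 : K) ∈ LinearMap.ker (restrictCompl K X) := by
  ext w
  exact Pi.single_eq_of_ne (fun h : w.1 = v => w.2 (h ▸ hv)) 1

theorem finrank_ker_restrictCompl [Fintype ι] (X : Set ι) :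
    finrank K (LinearMap.ker (restrictCompl K X)) = X.ncard := by
  classical
  have hsurj : Function.Surjective (restrictCompl K X) :=
    LinearMap.funLeft_surjective_of_injective _ _ _ Subtype.val_injective
  have h := (restrictCompl K X).finrank_range_add_finrank_ker
  rw [LinearMap.range_eq_top.2 hsurj, finrank_top, finrank_fintype_fun_eq_card,
    finrank_fintype_fun_eq_card, ← Nat.card_eq_fintype_card, ← Nat.card_eq_fintype_card,
    Nat.card_coe_set_eq, ← Set.ncard_add_ncard_compl X] at h
  omega

theorem finrank_span_image_single [Fintype ι] [DecidableEq ι] (X : Set ι) :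
    finrank K (span K ((fun v => Pi.single v (1 : K)) '' X)) = X.ncard := by
  have := Fintype.ofFinite X
  have hli : LinearIndependent K (fun v : X => (Pi.single (v : ι) 1 : ι → K)) :=
    (Pi.linearIndependent_single_one ι K).comp _ Subtype.val_injective
  rw [Set.image_eq_range, finrank_span_eq_card hli, ← Nat.card_eq_fintype_card,
    Nat.card_coe_set_eq]

theorem span_eq_top_of_forall_single_mem [Finite ι] [DecidableEq ι] {U : Submodule K (ι → K)}
    (h : ∀ v, Pi.single v (1 : K) ∈ U) : U = ⊤ := by
  rw [eq_top_iff, ← (Pi.basisFun K ι).span_eq, span_le]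
  rintro _ ⟨v, rfl⟩
  simpa using h v

end LinearAlgebra

section CutRank

open Module Submodule Matrix

variable (A : Matrix V V (ZMod 2)) {X : Set V}

omit [DecidableEq V]

omit [Fintype V] in
theorem cutRank_eq_finrank_map (X : Set V) :
    cutRank A X =
      finrank (ZMod 2) ((span (ZMod 2) (A.col '' X)).map (restrictCompl (ZMod 2) X)) := by
  rw [map_span, Set.image_image]
  rfl

omit [Fintype V] in
theorem cutRank_eq_rank_submatrix (X : Set V) [Fintype X] :
    cutRank A X = (A.submatrix (Subtype.val : ↥Xᶜ → V) (Subtype.val : ↥X → V)).rank := by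
  rw [Matrix.rank_eq_finrank_span_cols, cutRank, Set.image_eq_range]
  rfl

theorem cutRank_compl (hA : A.IsSymm) (X : Set V) : cutRank A Xᶜ = cutRank A X := by
  have := Fintype.ofFinite X
  have := Fintype.ofFinite ↥Xᶜ
  rw [cutRank_eq_rank_submatrix, cutRank_eq_rank_submatrix,
    ← rank_transpose (A.submatrix (Subtype.val : ↥Xᶜ → V) _), transpose_submatrix, hA.eq]
  exact rank_submatrix (A.submatrix (Subtype.val : ↥X → V) (Subtype.val : ↥Xᶜ → V))
    (Equiv.setCongr (compl_compl X)) (Equiv.refl _)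

theorem cutRank_eq_zero_iff : cutRank A X = 0 ↔ ∀ v ∈ X, ∀ w ∉ X, A w v = 0 := by
  simp only [cutRank, finrank_eq_zero, span_eq_bot, Set.forall_mem_image, funext_iff,
    Pi.zero_apply, Subtype.forall, Set.mem_compl_iff]

theorem one_le_cutRank_of_connected (hconn : (toSimpleGraph A).Connected) {v w : V}
    (hv : v ∈ X) (hw : w ∉ X) : 1 ≤ cutRank A X := by
  obtain ⟨p⟩ := hconn.preconnected v w
  obtain ⟨d, -, hd₁, hd₂⟩ := p.exists_boundary_dart X hv hw
  rw [Nat.one_le_iff_ne_zero, Ne, cutRank_eq_zero_iff]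
  intro h
  exact zero_ne_one ((h _ hd₁ _ hd₂).symm.trans d.adj.2.2)

theorem cutRank_reachable_eq_zero (hA : A.IsSymm) (u : V) :
    cutRank A {w | (toSimpleGraph A).Reachable u w} = 0 := by
  rw [cutRank_eq_zero_iff]
  intro v hv w hw
  by_contra h
  have hwv : A w v = 1 := Fin.eq_one_of_ne_zero _ h
  have hvw : (toSimpleGraph A).Adj v w := ⟨fun h => hw (h ▸ hv), hA.apply w v ▸ hwv, hwv⟩
  exact hw (hv.trans hvw.reachable)

theorem card_add_cutRank_le_finrank [DecidableEq V] (U : Submodule (ZMod 2) (V → ZMod 2))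
    (hsingle : ∀ v ∈ X, Pi.single v 1 ∈ U) (hcol : ∀ v ∈ X, A.col v ∈ U) :
    X.ncard + cutRank A X ≤ finrank (ZMod 2) U := by
  rw [cutRank_eq_finrank_map, ← finrank_map_add_finrank_inf_ker U (restrictCompl (ZMod 2) X),
    add_comm X.ncard, ← finrank_span_image_single (K := ZMod 2) X]
  refine add_le_add (finrank_mono (map_mono (span_le.2 ?_))) (finrank_mono (span_le.2 ?_))
  · rintro _ ⟨v, hv, rfl⟩
    exact hcol v hv
  · rintro _ ⟨v, hv, rfl⟩
    exact ⟨hsingle v hv, single_mem_ker_restrictCompl hv⟩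

theorem finrank_le_card_add_cutRank (U : Submodule (ZMod 2) (V → ZMod 2))
    (hU : U ≤ span (ZMod 2) (A.col '' X) ⊔ LinearMap.ker (restrictCompl (ZMod 2) X)) :
    finrank (ZMod 2) U ≤ X.ncard + cutRank A X := by
  rw [cutRank_eq_finrank_map, ← finrank_map_add_finrank_inf_ker U (restrictCompl (ZMod 2) X),
    add_comm X.ncard, ← finrank_ker_restrictCompl (K := ZMod 2) X]
  refine add_le_add (finrank_mono ?_) (finrank_mono inf_le_right)
  rw [map_le_iff_le_comap]
  exact hU.trans (sup_le (le_comap_map _ _) (LinearMap.ker_le_comap _))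

end CutRank

section IsotropicMatroid

open Module Submodule Matrix

variable (A : Matrix V V (ZMod 2))

section Columns

omit [Fintype V]

theorem iasCol_zero (v : V) : iasCol A (v, 0) = Pi.single v 1 := by
  funext w
  simp [iasCol, Pi.single_apply]

theorem iasCol_one (v : V) : iasCol A (v, 1) = A.col v := by
  funext w
  simp [iasCol]

theorem iasCol_two (v : V) : iasCol A (v, 2) = A.col v + Pi.single v 1 := by
  funext w
  simp [iasCol, Pi.single_apply]

theorem iasCol_zero_add_one (v : V) : iasCol A (v, 0) + iasCol A (v, 1) = iasCol A (v, 2) := by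
  rw [iasCol_zero, iasCol_one, iasCol_two, add_comm]

theorem iasCol_mem_span_pair {i j : Fin 3} (hij : i ≠ j) (v : V) (k : Fin 3) :
    iasCol A (v, k) ∈ span (ZMod 2) {iasCol A (v, i), iasCol A (v, j)} := by
  have hsum : iasCol A (v, 0) + iasCol A (v, 1) + iasCol A (v, 2) = 0 := by
    rw [iasCol_zero_add_one]
    exact ZModModule.add_self _
  have h : iasCol A (v, i) + iasCol A (v, j) + iasCol A (v, k) = 0 ∨ k = i ∨ k = j := by
    fin_cases i <;> fin_cases j <;> fin_cases k
    all_goals simp only [Fin.zero_eta, Fin.mk_one, Fin.reduceFinMk] at hij ⊢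
    all_goals first | exact absurd rfl hij | (left; linear_combination hsum) | (right; simp)
  rcases h with h | rfl | rfl
  · rw [eq_neg_of_add_eq_zero_right h]
    exact neg_mem (add_mem (subset_span (by simp)) (subset_span (by simp)))
  · exact subset_span (by simp)
  · exact subset_span (by simp)

theorem iasCol_triple_subset_span_or (T : Set (V × Fin 3)) (v : V) :
    (∀ k, iasCol A (v, k) ∈ span (ZMod 2) (iasCol A '' T)) ∨
      ∀ k, iasCol A (v, k) ∈ span (ZMod 2) (iasCol A '' Tᶜ) := by
  obtain ⟨i, j, hij, hT⟩ :=
    Fintype.exists_ne_map_eq_of_card_lt (fun k : Fin 3 => (v, k) ∈ T) (by simp)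
  have hpair : ∀ T' : Set (V × Fin 3), (v, i) ∈ T' → (v, j) ∈ T' →
      ∀ k, iasCol A (v, k) ∈ span (ZMod 2) (iasCol A '' T') := fun T' hi hj k =>
    span_mono (Set.insert_subset (Set.mem_image_of_mem _ hi)
      (Set.singleton_subset_iff.2 (Set.mem_image_of_mem _ hj))) (iasCol_mem_span_pair A hij v k)
  by_cases hi : (v, i) ∈ T
  · exact Or.inl (hpair T hi (hT ▸ hi))
  · exact Or.inr (hpair Tᶜ hi (hT ▸ hi : (v, j) ∉ T))

end Columns

theorem span_iasCol_univ : span (ZMod 2) (iasCol A '' Set.univ) = ⊤ :=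
  span_eq_top_of_forall_single_mem fun v =>
    iasCol_zero A v ▸ subset_span ⟨(v, 0), trivial, rfl⟩

theorem iasRank_univ : iasRank A Set.univ = Fintype.card V := by
  rw [iasRank, span_iasCol_univ, finrank_top, finrank_fintype_fun_eq_card]

theorem iasLambda_eq_finrank_inf (S : Set (V × Fin 3)) :
    iasLambda A S =
      finrank (ZMod 2) ↥(span (ZMod 2) (iasCol A '' S) ⊓ span (ZMod 2) (iasCol A '' Sᶜ)) := by
  have h := finrank_sup_add_finrank_inf_eq (span (ZMod 2) (iasCol A '' S))
    (span (ZMod 2) (iasCol A '' Sᶜ))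
  rw [← span_union, ← Set.image_union, Set.union_compl_self] at h
  rw [iasLambda, iasRank, iasRank, iasRank, ← h]
  omega

theorem iasRank_tauSet (X : Set V) : iasRank A (tauSet X) = X.ncard + cutRank A X := by
  refine le_antisymm (finrank_le_card_add_cutRank A _ (span_le.2 ?_))
    (card_add_cutRank_le_finrank A _ (fun v hv => ?_) (fun v hv => ?_))
  · rintro _ ⟨⟨v, k⟩, hv, rfl⟩
    have hcol : A.col v ∈
        span (ZMod 2) (A.col '' X) ⊔ LinearMap.ker (restrictCompl (ZMod 2) X) :=
      mem_sup_left (subset_span ⟨v, hv, rfl⟩)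
    have hsingle : Pi.single v 1 ∈
        span (ZMod 2) (A.col '' X) ⊔ LinearMap.ker (restrictCompl (ZMod 2) X) :=
      mem_sup_right (single_mem_ker_restrictCompl hv)
    fin_cases k
    · simpa [iasCol_zero] using hsingle
    · simpa [iasCol_one] using hcol
    · simpa [iasCol_two] using add_mem hcol hsingle
  · exact iasCol_zero A v ▸ subset_span ⟨(v, 0), hv, rfl⟩
  · exact iasCol_one A v ▸ subset_span ⟨(v, 1), hv, rfl⟩

theorem iasLambda_tauSet (X : Set V) :
    iasLambda A (tauSet X) = cutRank A X + cutRank A Xᶜ := by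
  have h := Set.ncard_add_ncard_compl X
  rw [Nat.card_eq_fintype_card] at h
  rw [iasLambda, show (tauSet X)ᶜ = tauSet Xᶜ from rfl, iasRank_tauSet, iasRank_tauSet,
    iasRank_univ]
  omega

theorem verticalSep_tauSet {k : ℕ} (X : Set V) (hk : 0 < k)
    (hlt : cutRank A X + cutRank A Xᶜ < k) (hX : k ≤ X.ncard + cutRank A X)
    (hXc : k ≤ Xᶜ.ncard + cutRank A Xᶜ) : VerticalSep A k (tauSet X) :=
  ⟨hk, iasLambda_tauSet A X ▸ hlt, iasRank_tauSet A X ▸ hX, iasRank_tauSet A Xᶜ ▸ hXc⟩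

end IsotropicMatroid

section Connectivity

open Module Submodule

variable (A : Matrix V V (ZMod 2))

theorem two_lt_of_verticalSep (hconn : (toSimpleGraph A).Connected) {k : ℕ}
    {S : Set (V × Fin 3)} (hS : VerticalSep A k S) : 2 < k := by
  obtain ⟨-, hlam, hkS, hkSc⟩ := hS
  have hinf := iasLambda_eq_finrank_inf A S
  have hlam' : iasLambda A S = iasRank A S + iasRank A Sᶜ - Fintype.card V := by
    rw [iasLambda, iasRank_univ]
  set U := span (ZMod 2) (iasCol A '' S)
  set W := span (ZMod 2) (iasCol A '' Sᶜ)
  set X := {v | ∀ i, iasCol A (v, i) ∈ U}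
  have hXc : ∀ v ∉ X, ∀ i, iasCol A (v, i) ∈ W := fun v hv =>
    (iasCol_triple_subset_span_or A S v).resolve_left hv
  obtain ⟨a, ha⟩ : X.Nonempty := by
    by_contra! hX
    have hW : W = ⊤ := span_eq_top_of_forall_single_mem fun v =>
      iasCol_zero A v ▸ hXc v (by simp [hX]) 0
    rw [hW, inf_top_eq] at hinf
    change k ≤ finrank (ZMod 2) U at hkS
    omega
  obtain ⟨b, hb⟩ : Xᶜ.Nonempty := by
    by_contra! hX
    have hU : U = ⊤ := span_eq_top_of_forall_single_mem fun v =>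
      iasCol_zero A v ▸ (Set.compl_empty_iff.1 hX ▸ Set.mem_univ v : v ∈ X) 0
    rw [hU, top_inf_eq] at hinf
    change k ≤ finrank (ZMod 2) W at hkSc
    omega
  have hU := card_add_cutRank_le_finrank A U (X := X) (fun v hv => iasCol_zero A v ▸ hv 0)
    (fun v hv => iasCol_one A v ▸ hv 1)
  have hW := card_add_cutRank_le_finrank A W (X := Xᶜ)
    (fun v hv => iasCol_zero A v ▸ hXc v hv 0) (fun v hv => iasCol_one A v ▸ hXc v hv 1)
  have hcut := one_le_cutRank_of_connected A hconn ha hb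
  have hcut' := one_le_cutRank_of_connected A hconn hb (not_not.2 ha)
  have hcard := Set.ncard_add_ncard_compl X
  rw [Nat.card_eq_fintype_card] at hcard
  change iasRank A S ≥ _ at hU
  change iasRank A Sᶜ ≥ _ at hW
  omega

omit [Fintype V] in
theorem iasKappa_le_of_verticalSep {k : ℕ} {S : Set (V × Fin 3)} (hS : VerticalSep A k S) :
    iasKappa A ≤ k :=
  Nat.sInf_le (Or.inl ⟨S, hS⟩)

theorem iasKappa_le_card : iasKappa A ≤ Fintype.card V :=
  Nat.sInf_le (Or.inr (iasRank_univ A).symm)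

theorem le_iasKappa {m : ℕ} (hm : m ≤ Fintype.card V)
    (h : ∀ k S, VerticalSep A k S → m ≤ k) : m ≤ iasKappa A := by
  refine le_csInf ⟨_, Or.inr rfl⟩ ?_
  rintro j (⟨S, hS⟩ | rfl)
  · exact h j S hS
  · rwa [iasRank_univ]

end Connectivity

theorem stmt8 (A : Matrix V V (ZMod 2)) (hA : A.IsSymm) :
    (Fintype.card V ≤ 3 ∧ (toSimpleGraph A).Connected →
      iasKappa A = Fintype.card V) ∧
    (¬ (toSimpleGraph A).Preconnected → iasKappa A = 1) ∧
    (4 ≤ Fintype.card V ∧ (toSimpleGraph A).Connected ∧ HasSplit A →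
      iasKappa A = 3) := by
  refine ⟨fun ⟨hcard, hconn⟩ => ?_, fun hdisc => ?_,
    fun ⟨hcard, hconn, X, hX, hXc, hcut⟩ => ?_⟩
  · refine le_antisymm (iasKappa_le_card A) (le_iasKappa A le_rfl fun k S hS => ?_)
    have := two_lt_of_verticalSep A hconn hS
    omega
  · obtain ⟨u, w, huw⟩ : ∃ u w, ¬ (toSimpleGraph A).Reachable u w := by
      simpa [SimpleGraph.Preconnected] using hdisc
    set X := {x | (toSimpleGraph A).Reachable u x}
    have hcut : cutRank A X = 0 := cutRank_reachable_eq_zero A hA u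
    have hcut' : cutRank A Xᶜ = 0 := (cutRank_compl A hA X).trans hcut
    have hX : 0 < X.ncard := (Set.ncard_pos X.toFinite).2 ⟨u, SimpleGraph.Reachable.refl u⟩
    have hXc : 0 < Xᶜ.ncard := (Set.ncard_pos Xᶜ.toFinite).2 ⟨w, huw⟩
    refine le_antisymm (iasKappa_le_of_verticalSep A (verticalSep_tauSet A X one_pos ?_ ?_ ?_))
      (le_iasKappa A (Fintype.card_pos_iff.2 ⟨u⟩) fun k S hS => hS.1) <;> omega
  · have ⟨a, ha⟩ := Set.nonempty_of_ncard_ne_zero (s := X) (by omega)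
    have ⟨b, hb⟩ := Set.nonempty_of_ncard_ne_zero (s := Xᶜ) (by omega)
    have hcut_pos := one_le_cutRank_of_connected A hconn ha hb
    have hcut' : cutRank A Xᶜ = cutRank A X := cutRank_compl A hA X
    refine le_antisymm (iasKappa_le_of_verticalSep A (verticalSep_tauSet A X ?_ ?_ ?_ ?_))
      (le_iasKappa A (by omega) fun k S hS => two_lt_of_verticalSep A hconn hS) <;> omega
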